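/- arXiv:2512.07260 — 2 statements merged into one kernel-verified Lean document; each statement's English description precedes it below -/
import Mathlib

section
/- Let n ≥ 1, s ∈ (0,1), κ > 0, c' > 0. Suppose u : ℝⁿ → ℝ satisfies |u(y)| ≤ c' |y|^{-κ} for all |y| ≥ R' with R' > 1. Then for |x| > 2R', ∫_{A₃⁺} |u(x)-u(y)| / |x-y|^{n+2s} dy ≤ C |x|^{-κ-2s}, where A₃⁺ = {y : |y| ≥ |x|/2, |x-y| ≥ |x|/2, |x-y| ≥ |y|} and C depends only on n, s, κ, c'. -/
/-!
On `A₃⁺` we have `‖y‖ ≥ ‖x‖ / 2` and `‖x - y‖ ≥ ‖y‖`, so the integrand is at most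
`(|u x| + |u y|) ‖y‖ ^ (-(n + 2s)) ≤ C ‖x‖ ^ (-κ) ‖y‖ ^ (-(n + 2s))`. Integrating in polar
coordinates, the tail `∫_{‖y‖ ≥ R} ‖y‖ ^ (-(n + 2s))` equals a dimensional constant times
`R ^ (-2s) / (2s)`, which for `R = ‖x‖ / 2` supplies the remaining factor `‖x‖ ^ (-2s)`.
-/

open MeasureTheory Metric Set Module

section RadialTail

lemma pow_smul_indicator_Ici_rpow_neg_eqOn {d : ℕ} (hd : 1 ≤ d) (R p : ℝ) :
    EqOn (fun t : ℝ => t ^ (d - 1) • (Ici R).indicator (· ^ (-p)) t)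
      ((Ici R).indicator (· ^ ((d : ℝ) - 1 - p))) (Ioi 0) := by
  intro t (ht : 0 < t)
  by_cases htR : t ∈ Ici R
  · simp only [indicator_of_mem htR, smul_eq_mul]
    rw [← Real.rpow_natCast, ← Real.rpow_add ht, Nat.cast_sub hd, Nat.cast_one, ← sub_eq_add_neg]
  · simp [indicator_of_notMem htR]

variable {d : ℕ} {p R : ℝ}

lemma integrableOn_Ioi_pow_smul_indicator_Ici_rpow_neg (hd : 1 ≤ d) (hp : (d : ℝ) < p)
    (hR : 0 < R) :
    IntegrableOn (fun t : ℝ => t ^ (d - 1) • (Ici R).indicator (· ^ (-p)) t) (Ioi 0) := by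
  rw [integrableOn_congr_fun (pow_smul_indicator_Ici_rpow_neg_eqOn hd R p) measurableSet_Ioi]
  refine (integrable_indicator_iff measurableSet_Ici).2 ?_ |>.integrableOn
  exact (integrableOn_Ici_iff_integrableOn_Ioi).2 (integrableOn_Ioi_rpow_of_lt (by linarith) hR)

lemma integral_Ioi_pow_smul_indicator_Ici_rpow_neg (hd : 1 ≤ d) (hp : (d : ℝ) < p)
    (hR : 0 < R) :
    ∫ t in Ioi (0 : ℝ), t ^ (d - 1) • (Ici R).indicator (· ^ (-p)) t
      = R ^ ((d : ℝ) - p) / (p - d) := by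
  rw [setIntegral_congr_fun measurableSet_Ioi (pow_smul_indicator_Ici_rpow_neg_eqOn hd R p),
    setIntegral_indicator measurableSet_Ici, inter_eq_right.2 (Ici_subset_Ioi.2 hR),
    integral_Ici_eq_integral_Ioi, integral_Ioi_rpow_of_lt (by linarith) hR,
    show (d : ℝ) - 1 - p + 1 = d - p by ring, neg_div, ← div_neg, neg_sub]

lemma indicator_compl_ball_norm_rpow_neg {E : Type*} [SeminormedAddCommGroup E] (R p : ℝ) :
    (ball (0 : E) R)ᶜ.indicator (fun y => ‖y‖ ^ (-p))
      = fun y => (Ici R).indicator (· ^ (-p)) ‖y‖ := by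
  ext y
  by_cases hy : R ≤ ‖y‖ <;> simp [hy]

variable {E : Type*} [NormedAddCommGroup E] [NormedSpace ℝ E] [FiniteDimensional ℝ E]
  [MeasurableSpace E] [BorelSpace E] [Nontrivial E] (μ : Measure E) [μ.IsAddHaarMeasure]

theorem integrableOn_compl_ball_norm_rpow_neg (hp : (finrank ℝ E : ℝ) < p) (hR : 0 < R) :
    IntegrableOn (fun y : E => ‖y‖ ^ (-p)) (ball 0 R)ᶜ μ := by
  rw [← integrable_indicator_iff measurableSet_ball.compl, indicator_compl_ball_norm_rpow_neg,
    integrable_fun_norm_addHaar μ]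
  exact integrableOn_Ioi_pow_smul_indicator_Ici_rpow_neg finrank_pos hp hR

theorem setIntegral_compl_ball_norm_rpow_neg (hp : (finrank ℝ E : ℝ) < p) (hR : 0 < R) :
    ∫ y in (ball (0 : E) R)ᶜ, ‖y‖ ^ (-p) ∂μ
      = finrank ℝ E * μ.real (ball 0 1) * (R ^ ((finrank ℝ E : ℝ) - p) / (p - finrank ℝ E)) := by
  rw [← integral_indicator measurableSet_ball.compl, indicator_compl_ball_norm_rpow_neg,
    integral_fun_norm_addHaar μ, integral_Ioi_pow_smul_indicator_Ici_rpow_neg finrank_pos hp hR,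
    nsmul_eq_mul, smul_eq_mul, mul_assoc]

end RadialTail

lemma div_two_rpow_neg {a : ℝ} (ha : 0 ≤ a) (κ : ℝ) : (a / 2) ^ (-κ) = 2 ^ κ * a ^ (-κ) := by
  rw [Real.div_rpow ha zero_le_two, Real.rpow_neg zero_le_two, div_eq_mul_inv, inv_inv, mul_comm]

section Decay

variable {E : Type*} [SeminormedAddCommGroup E] {u : E → ℝ} {c' κ R' : ℝ}

lemma abs_sub_le_of_rpow_decay (hc' : 0 ≤ c') (hκ : 0 ≤ κ) (hR' : 0 < R')
    (hu : ∀ y, R' ≤ ‖y‖ → |u y| ≤ c' * ‖y‖ ^ (-κ)) {x y : E} (hx : 2 * R' ≤ ‖x‖)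
    (hy : ‖x‖ / 2 ≤ ‖y‖) :
    |u x - u y| ≤ c' * (1 + 2 ^ κ) * ‖x‖ ^ (-κ) := by
  have hux : |u x| ≤ c' * ‖x‖ ^ (-κ) := hu x (by linarith)
  have huy : |u y| ≤ c' * 2 ^ κ * ‖x‖ ^ (-κ) :=
    calc |u y| ≤ c' * ‖y‖ ^ (-κ) := hu y (by linarith)
      _ ≤ c' * (‖x‖ / 2) ^ (-κ) :=
        mul_le_mul_of_nonneg_left (Real.rpow_le_rpow_of_nonpos (by linarith) hy (by linarith)) hc'
      _ = c' * 2 ^ κ * ‖x‖ ^ (-κ) := by rw [div_two_rpow_neg (norm_nonneg x)]; ring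
  calc |u x - u y| ≤ |u x| + |u y| := abs_sub _ _
    _ ≤ c' * ‖x‖ ^ (-κ) + c' * 2 ^ κ * ‖x‖ ^ (-κ) := add_le_add hux huy
    _ = c' * (1 + 2 ^ κ) * ‖x‖ ^ (-κ) := by ring

lemma abs_sub_div_rpow_le_of_rpow_decay (hc' : 0 ≤ c') (hκ : 0 ≤ κ) (hR' : 0 < R')
    (hu : ∀ y, R' ≤ ‖y‖ → |u y| ≤ c' * ‖y‖ ^ (-κ)) {x y : E} (hx : 2 * R' ≤ ‖x‖)
    (hy : ‖x‖ / 2 ≤ ‖y‖) (hxy : ‖y‖ ≤ ‖x - y‖) {p : ℝ} (hp : 0 ≤ p) :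
    |u x - u y| / ‖x - y‖ ^ p ≤ c' * (1 + 2 ^ κ) * ‖x‖ ^ (-κ) * ‖y‖ ^ (-p) := by
  have hy0 : 0 < ‖y‖ := by linarith
  rw [Real.rpow_neg hy0.le, ← div_eq_mul_inv]
  exact div_le_div₀ (by positivity) (abs_sub_le_of_rpow_decay hc' hκ hR' hu hx hy)
    (Real.rpow_pos_of_pos hy0 p) (Real.rpow_le_rpow hy0.le hxy hp)

end Decay

theorem far_field_estimate_general (n : ℕ) (hn : 1 ≤ n) (s κ c' R' : ℝ)
    (hs : 0 < s) (hκ : 0 < κ) (hc' : 0 < c') (hR' : 1 < R') :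
    ∃ C > 0, ∀ u : EuclideanSpace ℝ (Fin n) → ℝ,
      (∀ y : EuclideanSpace ℝ (Fin n), ‖y‖ ≥ R' → |u y| ≤ c' * ‖y‖ ^ (-κ)) →
      ∀ x : EuclideanSpace ℝ (Fin n), ‖x‖ > 2 * R' →
        (∫ y in {y : EuclideanSpace ℝ (Fin n) |
              ‖y‖ ≥ ‖x‖ / 2 ∧ ‖x - y‖ ≥ ‖x‖ / 2 ∧ ‖x - y‖ ≥ ‖y‖},
            |u x - u y| / ‖x - y‖ ^ ((n : ℝ) + 2 * s))
          ≤ C * ‖x‖ ^ (-κ - 2 * s) := by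
  have : Nontrivial (EuclideanSpace ℝ (Fin n)) :=
    Module.nontrivial_of_finrank_pos (R := ℝ) (by rwa [finrank_euclideanSpace_fin])
  set V := volume.real (ball (0 : EuclideanSpace ℝ (Fin n)) 1)
  have hV : 0 < V := ENNReal.toReal_pos (measure_ball_pos _ _ one_pos).ne' measure_ball_lt_top.ne
  refine ⟨c' * (1 + 2 ^ κ) * (n * V * (2 ^ (2 * s) / (2 * s))), by positivity, ?_⟩
  intro u hu x hx
  set A := {y : EuclideanSpace ℝ (Fin n) | ‖y‖ ≥ ‖x‖ / 2 ∧ ‖x - y‖ ≥ ‖x‖ / 2 ∧ ‖x - y‖ ≥ ‖y‖}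
  set p : ℝ := n + 2 * s
  set M := c' * (1 + 2 ^ κ) * ‖x‖ ^ (-κ)
  have hx2 : 0 < ‖x‖ / 2 := by linarith
  have hp : (finrank ℝ (EuclideanSpace ℝ (Fin n)) : ℝ) < p := by
    rw [finrank_euclideanSpace_fin]; linarith
  have hA : MeasurableSet A := by measurability
  have hAS : A ⊆ (ball 0 (‖x‖ / 2))ᶜ := fun y hy => by simpa using hy.1
  have hg : IntegrableOn (fun y : EuclideanSpace ℝ (Fin n) => M * ‖y‖ ^ (-p))
      (ball 0 (‖x‖ / 2))ᶜ :=
    (integrableOn_compl_ball_norm_rpow_neg volume hp hx2).const_mul M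
  calc ∫ y in A, |u x - u y| / ‖x - y‖ ^ p
      ≤ ∫ y in A, M * ‖y‖ ^ (-p) := by
        refine integral_mono_of_nonneg (.of_forall fun y => by positivity) (hg.mono_set hAS) ?_
        refine (ae_restrict_iff' hA).2 (.of_forall fun y ⟨hy, _, hxy⟩ => ?_)
        exact abs_sub_div_rpow_le_of_rpow_decay hc'.le hκ.le (by linarith) hu hx.le hy hxy
          (by positivity)
    _ ≤ ∫ y in (ball 0 (‖x‖ / 2))ᶜ, M * ‖y‖ ^ (-p) :=
        setIntegral_mono_set hg (.of_forall fun y => by positivity) hAS.eventuallyLE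
    _ = M * (n * V * ((‖x‖ / 2) ^ ((n : ℝ) - p) / (p - n))) := by
        rw [integral_const_mul, setIntegral_compl_ball_norm_rpow_neg volume hp hx2,
          finrank_euclideanSpace_fin]
    _ = _ := by
        rw [show (n : ℝ) - p = -(2 * s) by ring, show p - n = 2 * s by ring,
          div_two_rpow_neg (norm_nonneg x), sub_eq_add_neg, Real.rpow_add (by linarith)]
        ring

/-- Far-field estimate on the region `A₃⁺` in the decay lemma for the
fractional Laplacian. -/
theorem far_field_estimate (n : ℕ) (hn : 1 ≤ n) (s κ c' R' : ℝ)
    (hs : 0 < s) (hs1 : s < 1) (hκ : 0 < κ) (hc' : 0 < c') (hR' : 1 < R') :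
    ∃ C > 0, ∀ u : EuclideanSpace ℝ (Fin n) → ℝ,
      (∀ y : EuclideanSpace ℝ (Fin n), ‖y‖ ≥ R' → |u y| ≤ c' * ‖y‖ ^ (-κ)) →
      ∀ x : EuclideanSpace ℝ (Fin n), ‖x‖ > 2 * R' →
        (∫ y in {y : EuclideanSpace ℝ (Fin n) |
              ‖y‖ ≥ ‖x‖ / 2 ∧ ‖x - y‖ ≥ ‖x‖ / 2 ∧ ‖x - y‖ ≥ ‖y‖},
            |u x - u y| / ‖x - y‖ ^ ((n : ℝ) + 2 * s))
          ≤ C * ‖x‖ ^ (-κ - 2 * s) :=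
  far_field_estimate_general n hn s κ c' R' hs hκ hc' hR'
end

section
/- Let v ∈ C²(ℝⁿ) be a function with D²v(x) positive definite for all x, satisfying det(D²v) = F in ℝⁿ with F > 0. Fix e ∈ ℝⁿ \ {0} and s ∈ (0,1), and set Δₑˢv(x) = (v(x+e) + v(x-e) - 2v(x))/|e|^{2s}. Then for all x ∈ ℝⁿ: Σ_{i,j} cof_{ij}(D²v(x)) ∂_{ij}(Δₑˢv)(x) ≥ n (det D²v(x))^{(n-1)/n} · (F(x+e)^{1/n} + F(x-e)^{1/n} - 2F(x)^{1/n}) / |e|^{2s}. -/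
/-!
The Hessian of `Δₑˢv` at `x` is `(B + C - 2A) / |e|^{2s}` with `A = D²v(x)`, `B = D²v(x + e)`,
`C = D²v(x - e)`, so the left-hand side is `tr (adj A (B + C - 2A)) / |e|^{2s}`. As
`tr (adj A A) = n det A`, it suffices that `tr (adj A B) ≥ n (det A)^{(n-1)/n} (det B)^{1/n}` for
`A > 0`, `B ≥ 0`. Writing `B = T²`, `tr (adj A B) = det A · tr (T A⁻¹ T)`, and AM-GM on the
eigenvalues of the positive semidefinite matrix `T A⁻¹ T` bounds its trace below by
`n (det B / det A)^{1/n}`.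
-/

open Matrix

namespace Real

theorem rpow_sub_one_div_mul_rpow_one_div {a n : ℝ} (ha : 0 < a) (hn : n ≠ 0) :
    a ^ ((n - 1) / n) * a ^ (1 / n) = a := by
  rw [← rpow_add ha, ← add_div, sub_add_cancel, div_self hn, rpow_one]

end Real

namespace Matrix

theorem trace_mul_eq_sum_sum {ι κ R : Type*} [Fintype ι] [Fintype κ] [AddCommMonoid R]
    [Mul R] (P : Matrix ι κ R) (M : Matrix κ ι R) :
    (P * M).trace = ∑ i, ∑ j, P j i * M i j :=
  Finset.sum_comm

variable {ι : Type*} [Fintype ι] [DecidableEq ι] [Nonempty ι]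

theorem PosSemidef.card_mul_det_rpow_le_trace {C : Matrix ι ι ℝ} (hC : C.PosSemidef) :
    (Fintype.card ι : ℝ) * C.det ^ ((1 : ℝ) / Fintype.card ι) ≤ C.trace := by
  have hcard : (0 : ℝ) < Fintype.card ι := Nat.cast_pos.mpr Fintype.card_pos
  have amgm := Real.geom_mean_le_arith_mean Finset.univ (fun _ ↦ 1) hC.1.eigenvalues
    (fun _ _ ↦ zero_le_one) (by simpa using hcard) (fun i _ ↦ hC.eigenvalues_nonneg i)
  simp only [Real.rpow_one, Finset.sum_const, Finset.card_univ, nsmul_eq_mul, mul_one,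
    one_mul] at amgm
  rw [hC.1.det_eq_prod_eigenvalues, hC.1.trace_eq_sum_eigenvalues]
  simp only [RCLike.ofReal_real_eq_id, id_eq, one_div]
  rw [le_div_iff₀ hcard] at amgm
  linarith

open scoped MatrixOrder in
theorem PosDef.card_mul_det_rpow_mul_det_rpow_le_trace_adjugate_mul {A B : Matrix ι ι ℝ}
    (hA : A.PosDef) (hB : B.PosSemidef) :
    (Fintype.card ι : ℝ) * A.det ^ (((Fintype.card ι : ℝ) - 1) / Fintype.card ι) *
      B.det ^ ((1 : ℝ) / Fintype.card ι) ≤ (A.adjugate * B).trace := by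
  set n : ℝ := (Fintype.card ι : ℝ)
  have hn : n ≠ 0 := Nat.cast_ne_zero.mpr Fintype.card_ne_zero
  have hAdet := hA.det_pos
  set T := CFC.sqrt B
  have hT : T.IsHermitian := (CFC.sqrt_nonneg B).posSemidef.1
  have hTT : T * T = B := CFC.sqrt_mul_sqrt_self B hB.nonneg
  have hC : (T * A⁻¹ * T).PosSemidef := by
    simpa only [hT.eq] using hA.inv.posSemidef.conjTranspose_mul_mul_same T
  have hdetC : (T * A⁻¹ * T).det = A.det⁻¹ * B.det := by
    rw [← hTT, det_mul, det_mul, det_mul, det_nonsing_inv, Ring.inverse_eq_inv']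
    ring
  have htrace : (A.adjugate * B).trace = A.det * (T * A⁻¹ * T).trace := by
    rw [← hTT, ← Matrix.mul_assoc, trace_mul_cycle A.adjugate, inv_def, Ring.inverse_eq_inv',
      Matrix.mul_smul, Matrix.smul_mul, trace_smul, smul_eq_mul, ← mul_assoc,
      mul_inv_cancel₀ hAdet.ne', one_mul]
  have hpow : A.det ^ ((n - 1) / n) = A.det * A.det⁻¹ ^ (1 / n) := by
    rw [Real.inv_rpow hAdet.le, ← div_eq_mul_inv, eq_div_iff (by positivity),
      Real.rpow_sub_one_div_mul_rpow_one_div hAdet hn]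
  calc n * A.det ^ ((n - 1) / n) * B.det ^ (1 / n)
      = A.det * (n * (T * A⁻¹ * T).det ^ (1 / n)) := by
        rw [hdetC, Real.mul_rpow (by positivity) hB.det_nonneg, hpow]
        ring
    _ ≤ A.det * (T * A⁻¹ * T).trace := by gcongr; exact hC.card_mul_det_rpow_le_trace
    _ = (A.adjugate * B).trace := htrace.symm

theorem PosDef.card_mul_det_rpow_mul_le_trace_adjugate_mul_second_difference
    {A B C : Matrix ι ι ℝ} (hA : A.PosDef) (hB : B.PosSemidef) (hC : C.PosSemidef) :
    (Fintype.card ι : ℝ) * A.det ^ (((Fintype.card ι : ℝ) - 1) / Fintype.card ι) *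
      (B.det ^ ((1 : ℝ) / Fintype.card ι) + C.det ^ ((1 : ℝ) / Fintype.card ι)
        - 2 * A.det ^ ((1 : ℝ) / Fintype.card ι)) ≤
      (A.adjugate * (B + C - (2 : ℝ) • A)).trace := by
  have hself := Real.rpow_sub_one_div_mul_rpow_one_div hA.det_pos
    (Nat.cast_ne_zero.mpr Fintype.card_ne_zero : (Fintype.card ι : ℝ) ≠ 0)
  rw [Matrix.mul_sub, Matrix.mul_add, Matrix.mul_smul, adjugate_mul, trace_sub, trace_add,
    trace_smul, trace_smul, trace_one, smul_eq_mul, smul_eq_mul]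
  linear_combination hA.card_mul_det_rpow_mul_det_rpow_le_trace_adjugate_mul hB +
    hA.card_mul_det_rpow_mul_det_rpow_le_trace_adjugate_mul hC - 2 * (Fintype.card ι) * hself

end Matrix

section SecondDifference

variable {𝕜 E F : Type*} [NontriviallyNormedField 𝕜] [NormedAddCommGroup E] [NormedSpace 𝕜 E]
  [NormedAddCommGroup F] [NormedSpace 𝕜 F]

theorem iteratedFDeriv_smul_second_difference {k : ℕ} {f : E → F} (hf : ContDiff 𝕜 k f)
    (c : 𝕜) (e x : E) :
    iteratedFDeriv 𝕜 k (fun z ↦ c • (f (z + e) + f (z - e) - (2 : 𝕜) • f z)) x =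
      c • (iteratedFDeriv 𝕜 k f (x + e) + iteratedFDeriv 𝕜 k f (x - e) -
        (2 : 𝕜) • iteratedFDeriv 𝕜 k f x) := by
  have hplus : ContDiff 𝕜 k (fun z ↦ f (z + e)) := hf.comp (contDiff_id.add contDiff_const)
  have hminus : ContDiff 𝕜 k (fun z ↦ f (z - e)) := hf.comp (contDiff_id.sub contDiff_const)
  rw [iteratedFDeriv_const_smul_apply' ((hplus.add hminus).sub (hf.const_smul _)).contDiffAt,
    fun_iteratedFDeriv_sub_apply (hplus.add hminus).contDiffAt (hf.const_smul _).contDiffAt,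
    fun_iteratedFDeriv_add_apply hplus.contDiffAt hminus.contDiffAt,
    iteratedFDeriv_const_smul_apply' hf.contDiffAt,
    iteratedFDeriv_comp_add_right, iteratedFDeriv_comp_sub]

end SecondDifference

theorem increment_supersolution_general (n : ℕ) (hn : 1 ≤ n)
    (v : EuclideanSpace ℝ (Fin n) → ℝ) (hv : ContDiff ℝ 2 v)
    (H : EuclideanSpace ℝ (Fin n) → Matrix (Fin n) (Fin n) ℝ)
    (hH : ∀ x i j, H x i j =
      iteratedFDeriv ℝ 2 v x
        ![EuclideanSpace.single i (1 : ℝ), EuclideanSpace.single j (1 : ℝ)])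
    (hHpos : ∀ x, (H x).PosDef)
    (F : EuclideanSpace ℝ (Fin n) → ℝ)
    (hdet : ∀ x, (H x).det = F x)
    (e : EuclideanSpace ℝ (Fin n))
    (s : ℝ) :
    ∀ x, (∑ i, ∑ j, (H x).adjugate j i *
        iteratedFDeriv ℝ 2
          (fun z => (v (z + e) + v (z - e) - 2 * v z) / ‖e‖ ^ (2 * s)) x
          ![EuclideanSpace.single i (1 : ℝ), EuclideanSpace.single j (1 : ℝ)])
      ≥ (n : ℝ) * (F x) ^ (((n : ℝ) - 1) / n) *
          ((F (x + e)) ^ ((1 : ℝ) / n) + (F (x - e)) ^ ((1 : ℝ) / n)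
            - 2 * (F x) ^ ((1 : ℝ) / n)) / ‖e‖ ^ (2 * s) := by
  intro x
  have : Nonempty (Fin n) := ⟨⟨0, hn⟩⟩
  have hquot : (fun z ↦ (v (z + e) + v (z - e) - 2 * v z) / ‖e‖ ^ (2 * s)) =
      fun z ↦ (‖e‖ ^ (2 * s))⁻¹ • (v (z + e) + v (z - e) - (2 : ℝ) • v z) := by
    funext z
    rw [smul_eq_mul, smul_eq_mul, inv_mul_eq_div]
  have hhess : ∀ i j,
      iteratedFDeriv ℝ 2 (fun z ↦ (v (z + e) + v (z - e) - 2 * v z) / ‖e‖ ^ (2 * s)) x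
        ![EuclideanSpace.single i (1 : ℝ), EuclideanSpace.single j (1 : ℝ)] =
      (H (x + e) + H (x - e) - (2 : ℝ) • H x) i j / ‖e‖ ^ (2 * s) := by
    intro i j
    rw [hquot, iteratedFDeriv_smul_second_difference hv]
    simp only [_root_.smul_apply, _root_.add_apply, _root_.sub_apply, Matrix.add_apply,
      Matrix.sub_apply, Matrix.smul_apply, smul_eq_mul, inv_mul_eq_div, hH]
  have hbound := (hHpos x).card_mul_det_rpow_mul_le_trace_adjugate_mul_second_difference
    (hHpos (x + e)).posSemidef (hHpos (x - e)).posSemidef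
  simp only [Fintype.card_fin, hdet] at hbound
  simp only [hhess, mul_div_assoc', ← Finset.sum_div, ← trace_mul_eq_sum_sum]
  exact div_le_div_of_nonneg_right hbound (by positivity)

/-- Lemma 3.1 of the paper: the fractional-order second difference `Δₑˢv` is a
supersolution of the linearized Monge–Ampère operator:
`∑ cof_{ij}(D²v) ∂_{ij}(Δₑˢv) ≥ n (det D²v)^{(n-1)/n} (F(x+e)^{1/n}+F(x-e)^{1/n}-2F(x)^{1/n})/|e|^{2s}`. -/
theorem increment_supersolution (n : ℕ) (hn : 1 ≤ n)
    (v : EuclideanSpace ℝ (Fin n) → ℝ) (hv : ContDiff ℝ 2 v)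
    (H : EuclideanSpace ℝ (Fin n) → Matrix (Fin n) (Fin n) ℝ)
    (hH : ∀ x i j, H x i j =
      iteratedFDeriv ℝ 2 v x
        ![EuclideanSpace.single i (1 : ℝ), EuclideanSpace.single j (1 : ℝ)])
    (hHpos : ∀ x, (H x).PosDef)
    (F : EuclideanSpace ℝ (Fin n) → ℝ) (hF : ∀ x, 0 < F x)
    (hdet : ∀ x, (H x).det = F x)
    (e : EuclideanSpace ℝ (Fin n)) (he : e ≠ 0)
    (s : ℝ) (hs : 0 < s) (hs1 : s < 1) :
    ∀ x, (∑ i, ∑ j, (H x).adjugate j i *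
        iteratedFDeriv ℝ 2
          (fun z => (v (z + e) + v (z - e) - 2 * v z) / ‖e‖ ^ (2 * s)) x
          ![EuclideanSpace.single i (1 : ℝ), EuclideanSpace.single j (1 : ℝ)])
      ≥ (n : ℝ) * (F x) ^ (((n : ℝ) - 1) / n) *
          ((F (x + e)) ^ ((1 : ℝ) / n) + (F (x - e)) ^ ((1 : ℝ) / n)
            - 2 * (F x) ^ ((1 : ℝ) / n)) / ‖e‖ ^ (2 * s) :=
  increment_supersolution_general n hn v hv H hH hHpos F hdet e s
end
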